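/- arXiv:2111.08698 — 2 statements merged into one kernel-verified Lean document; each statement's English description precedes it below -/
import Mathlib

section
/- Let f be any randomized social choice function for 7 voters and 7 candidates, i.e., a map assigning to every preference profile σ on C = {1,...,7}, F = {a,b,c,d,e,f,g} a probability distribution f(σ) on F. Then distortion(f) := sup_σ sup_{d ◁ σ, OPT(d)>0} cost_d(f(σ))/OPT(d) ≥ 2.063164. -/
/-- Points of the instance: `Sum.inl j` is client `j`, `Sum.inr i` is facility `i`. -/
abbrev Pt := Fin 7 ⊕ Fin 7

/-- `d` is a pseudometric: nonnegative, symmetric, zero on the diagonal,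
and satisfying the triangle inequality `d x y ≤ d x z + d y z`. -/
def IsPseudometric (d : Pt → Pt → ℝ) : Prop :=
  (∀ x y, 0 ≤ d x y) ∧ (∀ x y, d x y = d y x) ∧ (∀ x, d x x = 0) ∧
    (∀ x y z, d x y ≤ d x z + d y z)

/-- Rank function of the instance `I*` (facilities `a,…,g` are `0,…,6`):
clients 1,2,3 rank c ≻ e ≻ b ≻ a ≻ f ≻ g ≻ d, clients 4,5,6 rank
d ≻ g ≻ f ≻ a ≻ e ≻ b ≻ c, client 7 ranks b ≻ a ≻ f ≻ g ≻ e ≻ c ≻ d. -/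
def rkStar (j : Fin 7) : Fin 7 → ℕ :=
  if j.val ≤ 2 then ![3, 2, 0, 6, 1, 4, 5]
  else if j.val ≤ 5 then ![3, 5, 6, 0, 4, 2, 1]
  else ![1, 0, 5, 6, 4, 2, 3]

/-- The preference profile `σ*` of the instance `I*`: `a ≽_j b` iff `a` has
(weakly) smaller rank than `b` in client `j`'s list. -/
def sigmaStar (j : Fin 7) (a b : Fin 7) : Prop := rkStar j a ≤ rkStar j b

/-- `d` is consistent with the profile `σ`: whenever client `j` prefers `a` to `b`,
facility `a` is at least as close to `j` as `b`. -/
def Consistent (d : Pt → Pt → ℝ) (σ : Fin 7 → Fin 7 → Fin 7 → Prop) : Prop :=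
  ∀ j a b, σ j a b → d (Sum.inr a) (Sum.inl j) ≤ d (Sum.inr b) (Sum.inl j)

/-- Expected social cost of the distribution `q` under metric `d`. -/
def cost (d : Pt → Pt → ℝ) (q : Fin 7 → ℝ) : ℝ :=
  ∑ i, q i * ∑ j, d (Sum.inr i) (Sum.inl j)

/-- Total cost of the clients if facility `o` is chosen. -/
def facCost (d : Pt → Pt → ℝ) (o : Fin 7) : ℝ :=
  ∑ j, d (Sum.inr o) (Sum.inl j)

/-- Optimal (minimum) total cost over all facilities. -/
noncomputable def OPT (d : Pt → Pt → ℝ) : ℝ :=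
  Finset.univ.inf' Finset.univ_nonempty (facCost d)


def cidx (j : Fin 7) : Fin 14 := ⟨j.1, by omega⟩
def fidx (i : Fin 7) : Fin 14 := ⟨i.1 + 7, by omega⟩

def dm0 : Fin 14 → Fin 14 → ℕ :=
  ![![0, 24, 24, 24, 24, 24, 24, 12, 12, 12, 36, 12, 36, 36],
   ![24, 0, 24, 24, 24, 24, 24, 12, 12, 12, 36, 12, 36, 36],
   ![24, 24, 0, 24, 24, 24, 24, 12, 12, 12, 36, 12, 36, 36],
   ![24, 24, 24, 0, 24, 24, 24, 12, 36, 36, 12, 36, 12, 12],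
   ![24, 24, 24, 24, 0, 24, 24, 12, 36, 36, 12, 36, 12, 12],
   ![24, 24, 24, 24, 24, 0, 24, 12, 36, 36, 12, 36, 12, 12],
   ![24, 24, 24, 24, 24, 24, 0, 12, 12, 36, 36, 36, 36, 36],
   ![12, 12, 12, 12, 12, 12, 12, 0, 24, 24, 24, 24, 24, 24],
   ![12, 12, 12, 36, 36, 36, 12, 24, 0, 24, 48, 24, 48, 48],
   ![12, 12, 12, 36, 36, 36, 36, 24, 24, 0, 48, 24, 48, 48],
   ![36, 36, 36, 12, 12, 12, 36, 24, 48, 48, 0, 48, 24, 24],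
   ![12, 12, 12, 36, 36, 36, 36, 24, 24, 24, 48, 0, 48, 48],
   ![36, 36, 36, 12, 12, 12, 36, 24, 48, 48, 24, 48, 0, 24],
   ![36, 36, 36, 12, 12, 12, 36, 24, 48, 48, 24, 48, 24, 0]]

def dm1 : Fin 14 → Fin 14 → ℕ :=
  ![![0, 28, 28, 28, 28, 28, 14, 42, 14, 14, 42, 14, 42, 42],
   ![28, 0, 28, 28, 28, 28, 14, 42, 14, 14, 42, 14, 42, 42],
   ![28, 28, 0, 28, 28, 28, 14, 42, 14, 14, 42, 14, 42, 42],
   ![28, 28, 28, 0, 28, 28, 14, 14, 14, 42, 14, 14, 14, 14],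
   ![28, 28, 28, 28, 0, 28, 14, 14, 14, 42, 14, 14, 14, 14],
   ![28, 28, 28, 28, 28, 0, 14, 14, 14, 42, 14, 14, 14, 14],
   ![14, 14, 14, 14, 14, 14, 0, 28, 0, 28, 28, 28, 28, 28],
   ![42, 42, 42, 14, 14, 14, 28, 0, 28, 56, 28, 28, 28, 28],
   ![14, 14, 14, 14, 14, 14, 0, 28, 0, 28, 28, 28, 28, 28],
   ![14, 14, 14, 42, 42, 42, 28, 56, 28, 0, 56, 28, 56, 56],
   ![42, 42, 42, 14, 14, 14, 28, 28, 28, 56, 0, 28, 28, 28],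
   ![14, 14, 14, 14, 14, 14, 28, 28, 28, 28, 28, 0, 28, 28],
   ![42, 42, 42, 14, 14, 14, 28, 28, 28, 56, 28, 28, 0, 28],
   ![42, 42, 42, 14, 14, 14, 28, 28, 28, 56, 28, 28, 28, 0]]

def dm2 : Fin 14 → Fin 14 → ℕ :=
  ![![0, 0, 0, 21, 21, 21, 21, 42, 42, 0, 42, 42, 42, 42],
   ![0, 0, 0, 21, 21, 21, 21, 42, 42, 0, 42, 42, 42, 42],
   ![0, 0, 0, 21, 21, 21, 21, 42, 42, 0, 42, 42, 42, 42],
   ![21, 21, 21, 0, 42, 42, 42, 21, 21, 21, 21, 21, 21, 21],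
   ![21, 21, 21, 42, 0, 42, 42, 21, 21, 21, 21, 21, 21, 21],
   ![21, 21, 21, 42, 42, 0, 42, 21, 21, 21, 21, 21, 21, 21],
   ![21, 21, 21, 42, 42, 42, 0, 21, 21, 21, 63, 21, 21, 21],
   ![42, 42, 42, 21, 21, 21, 21, 0, 42, 42, 42, 42, 42, 42],
   ![42, 42, 42, 21, 21, 21, 21, 42, 0, 42, 42, 42, 42, 42],
   ![0, 0, 0, 21, 21, 21, 21, 42, 42, 0, 42, 42, 42, 42],
   ![42, 42, 42, 21, 21, 21, 63, 42, 42, 42, 0, 42, 42, 42],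
   ![42, 42, 42, 21, 21, 21, 21, 42, 42, 42, 42, 0, 42, 42],
   ![42, 42, 42, 21, 21, 21, 21, 42, 42, 42, 42, 42, 0, 42],
   ![42, 42, 42, 21, 21, 21, 21, 42, 42, 42, 42, 42, 42, 0]]

def dm3 : Fin 14 → Fin 14 → ℕ :=
  ![![0, 42, 42, 21, 21, 21, 42, 21, 21, 21, 21, 21, 21, 21],
   ![42, 0, 42, 21, 21, 21, 42, 21, 21, 21, 21, 21, 21, 21],
   ![42, 42, 0, 21, 21, 21, 42, 21, 21, 21, 21, 21, 21, 21],
   ![21, 21, 21, 0, 0, 0, 21, 42, 42, 42, 0, 42, 42, 42],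
   ![21, 21, 21, 0, 0, 0, 21, 42, 42, 42, 0, 42, 42, 42],
   ![21, 21, 21, 0, 0, 0, 21, 42, 42, 42, 0, 42, 42, 42],
   ![42, 42, 42, 21, 21, 21, 0, 21, 21, 21, 21, 21, 21, 21],
   ![21, 21, 21, 42, 42, 42, 21, 0, 42, 42, 42, 42, 42, 42],
   ![21, 21, 21, 42, 42, 42, 21, 42, 0, 42, 42, 42, 42, 42],
   ![21, 21, 21, 42, 42, 42, 21, 42, 42, 0, 42, 42, 42, 42],
   ![21, 21, 21, 0, 0, 0, 21, 42, 42, 42, 0, 42, 42, 42],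
   ![21, 21, 21, 42, 42, 42, 21, 42, 42, 42, 42, 0, 42, 42],
   ![21, 21, 21, 42, 42, 42, 21, 42, 42, 42, 42, 42, 0, 42],
   ![21, 21, 21, 42, 42, 42, 21, 42, 42, 42, 42, 42, 42, 0]]

def dm4 : Fin 14 → Fin 14 → ℕ :=
  ![![0, 24, 24, 24, 24, 24, 24, 36, 36, 12, 36, 12, 36, 36],
   ![24, 0, 24, 24, 24, 24, 24, 36, 36, 12, 36, 12, 36, 36],
   ![24, 24, 0, 24, 24, 24, 24, 36, 36, 12, 36, 12, 36, 36],
   ![24, 24, 24, 0, 24, 24, 24, 12, 36, 36, 12, 12, 12, 12],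
   ![24, 24, 24, 24, 0, 24, 24, 12, 36, 36, 12, 12, 12, 12],
   ![24, 24, 24, 24, 24, 0, 24, 12, 36, 36, 12, 12, 12, 12],
   ![24, 24, 24, 24, 24, 24, 0, 12, 12, 36, 36, 12, 12, 12],
   ![36, 36, 36, 12, 12, 12, 12, 0, 24, 48, 24, 24, 24, 24],
   ![36, 36, 36, 36, 36, 36, 12, 24, 0, 48, 48, 24, 24, 24],
   ![12, 12, 12, 36, 36, 36, 36, 48, 48, 0, 48, 24, 48, 48],
   ![36, 36, 36, 12, 12, 12, 36, 24, 48, 48, 0, 24, 24, 24],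
   ![12, 12, 12, 12, 12, 12, 12, 24, 24, 24, 24, 0, 24, 24],
   ![36, 36, 36, 12, 12, 12, 12, 24, 24, 48, 24, 24, 0, 24],
   ![36, 36, 36, 12, 12, 12, 12, 24, 24, 48, 24, 24, 24, 0]]

def dm5 : Fin 14 → Fin 14 → ℕ :=
  ![![0, 24, 24, 24, 24, 24, 24, 12, 12, 12, 36, 12, 12, 36],
   ![24, 0, 24, 24, 24, 24, 24, 12, 12, 12, 36, 12, 12, 36],
   ![24, 24, 0, 24, 24, 24, 24, 12, 12, 12, 36, 12, 12, 36],
   ![24, 24, 24, 0, 24, 24, 24, 36, 36, 36, 12, 36, 12, 12],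
   ![24, 24, 24, 24, 0, 24, 24, 36, 36, 36, 12, 36, 12, 12],
   ![24, 24, 24, 24, 24, 0, 24, 36, 36, 36, 12, 36, 12, 12],
   ![24, 24, 24, 24, 24, 24, 0, 12, 12, 36, 36, 36, 12, 36],
   ![12, 12, 12, 36, 36, 36, 12, 0, 24, 24, 48, 24, 24, 48],
   ![12, 12, 12, 36, 36, 36, 12, 24, 0, 24, 48, 24, 24, 48],
   ![12, 12, 12, 36, 36, 36, 36, 24, 24, 0, 48, 24, 24, 48],
   ![36, 36, 36, 12, 12, 12, 36, 48, 48, 48, 0, 48, 24, 24],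
   ![12, 12, 12, 36, 36, 36, 36, 24, 24, 24, 48, 0, 24, 48],
   ![12, 12, 12, 12, 12, 12, 12, 24, 24, 24, 24, 24, 0, 24],
   ![36, 36, 36, 12, 12, 12, 36, 48, 48, 48, 24, 48, 24, 0]]

def dm6 : Fin 14 → Fin 14 → ℕ :=
  ![![0, 24, 24, 24, 24, 24, 24, 12, 12, 12, 36, 12, 12, 12],
   ![24, 0, 24, 24, 24, 24, 24, 12, 12, 12, 36, 12, 12, 12],
   ![24, 24, 0, 24, 24, 24, 24, 12, 12, 12, 36, 12, 12, 12],
   ![24, 24, 24, 0, 24, 24, 24, 36, 36, 36, 12, 36, 36, 12],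
   ![24, 24, 24, 24, 0, 24, 24, 36, 36, 36, 12, 36, 36, 12],
   ![24, 24, 24, 24, 24, 0, 24, 36, 36, 36, 12, 36, 36, 12],
   ![24, 24, 24, 24, 24, 24, 0, 12, 12, 36, 36, 36, 12, 12],
   ![12, 12, 12, 36, 36, 36, 12, 0, 24, 24, 48, 24, 24, 24],
   ![12, 12, 12, 36, 36, 36, 12, 24, 0, 24, 48, 24, 24, 24],
   ![12, 12, 12, 36, 36, 36, 36, 24, 24, 0, 48, 24, 24, 24],
   ![36, 36, 36, 12, 12, 12, 36, 48, 48, 48, 0, 48, 48, 24],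
   ![12, 12, 12, 36, 36, 36, 36, 24, 24, 24, 48, 0, 24, 24],
   ![12, 12, 12, 36, 36, 36, 12, 24, 24, 24, 48, 24, 0, 24],
   ![12, 12, 12, 12, 12, 12, 12, 24, 24, 24, 24, 24, 24, 0]]

def dmat : Fin 7 → Fin 14 → Fin 14 → ℕ := ![dm0, dm1, dm2, dm3, dm4, dm5, dm6]


noncomputable def dR (m : Fin 7) : Pt → Pt → ℝ :=
  fun x y => (dmat m (Sum.elim cidx fidx x) (Sum.elim cidx fidx y) : ℝ)

def FC (m o : Fin 7) : ℕ := ∑ j, dmat m (fidx o) (cidx j)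

lemma hsymm0 : ∀ p q : Fin 14, dm0 p q = dm0 q p := by decide
lemma hdiag0 : ∀ p : Fin 14, dm0 p p = 0 := by decide
lemma htri0 : ∀ p q r : Fin 14, dm0 p q ≤ dm0 p r + dm0 q r := by decide
lemma hsymm1 : ∀ p q : Fin 14, dm1 p q = dm1 q p := by decide
lemma hdiag1 : ∀ p : Fin 14, dm1 p p = 0 := by decide
lemma htri1 : ∀ p q r : Fin 14, dm1 p q ≤ dm1 p r + dm1 q r := by decide
lemma hsymm2 : ∀ p q : Fin 14, dm2 p q = dm2 q p := by decide
lemma hdiag2 : ∀ p : Fin 14, dm2 p p = 0 := by decide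
lemma htri2 : ∀ p q r : Fin 14, dm2 p q ≤ dm2 p r + dm2 q r := by decide
lemma hsymm3 : ∀ p q : Fin 14, dm3 p q = dm3 q p := by decide
lemma hdiag3 : ∀ p : Fin 14, dm3 p p = 0 := by decide
lemma htri3 : ∀ p q r : Fin 14, dm3 p q ≤ dm3 p r + dm3 q r := by decide
lemma hsymm4 : ∀ p q : Fin 14, dm4 p q = dm4 q p := by decide
lemma hdiag4 : ∀ p : Fin 14, dm4 p p = 0 := by decide
lemma htri4 : ∀ p q r : Fin 14, dm4 p q ≤ dm4 p r + dm4 q r := by decide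
lemma hsymm5 : ∀ p q : Fin 14, dm5 p q = dm5 q p := by decide
lemma hdiag5 : ∀ p : Fin 14, dm5 p p = 0 := by decide
lemma htri5 : ∀ p q r : Fin 14, dm5 p q ≤ dm5 p r + dm5 q r := by decide
lemma hsymm6 : ∀ p q : Fin 14, dm6 p q = dm6 q p := by decide
lemma hdiag6 : ∀ p : Fin 14, dm6 p p = 0 := by decide
lemma htri6 : ∀ p q r : Fin 14, dm6 p q ≤ dm6 p r + dm6 q r := by decide

lemma hsymm : ∀ m (p q : Fin 14), dmat m p q = dmat m q p := by
  intro m; fin_cases m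
  exacts [hsymm0, hsymm1, hsymm2, hsymm3, hsymm4, hsymm5, hsymm6]

lemma hdiag : ∀ m (p : Fin 14), dmat m p p = 0 := by
  intro m; fin_cases m
  exacts [hdiag0, hdiag1, hdiag2, hdiag3, hdiag4, hdiag5, hdiag6]

lemma htri : ∀ m (p q r : Fin 14), dmat m p q ≤ dmat m p r + dmat m q r := by
  intro m; fin_cases m
  exacts [htri0, htri1, htri2, htri3, htri4, htri5, htri6]

lemma hcons : ∀ m j a b : Fin 7, rkStar j a ≤ rkStar j b →
    dmat m (fidx a) (cidx j) ≤ dmat m (fidx b) (cidx j) := by decide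

lemma hFCpos : ∀ m o : Fin 7, 0 < FC m o := by decide

lemma pseudo (m : Fin 7) : IsPseudometric (dR m) := by
  refine ⟨fun x y => ?_, fun x y => ?_, fun x => ?_, fun x y z => ?_⟩ <;> unfold dR
  · positivity
  · exact_mod_cast hsymm m _ _
  · exact_mod_cast hdiag m _
  · exact_mod_cast htri m _ _ _

lemma consist (m : Fin 7) : Consistent (dR m) sigmaStar := by
  intro j a b h
  unfold dR
  exact_mod_cast hcons m j a b h

lemma facCost_eq (m : Fin 7) (o : Fin 7) : facCost (dR m) o = (FC m o : ℝ) := by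
  simp only [facCost, dR, FC, Nat.cast_sum]
  rfl

lemma cost_eq (m : Fin 7) (q : Fin 7 → ℝ) :
    cost (dR m) q = ∑ i, q i * (FC m i : ℝ) := by
  simp only [cost, FC, Nat.cast_sum]
  rfl

lemma hOPTpos (m : Fin 7) : 0 < OPT (dR m) := by
  rw [OPT, Finset.lt_inf'_iff]
  intro o _
  rw [facCost_eq]
  exact_mod_cast hFCpos m o

lemma hOPTle (m : Fin 7) : OPT (dR m) ≤ 84 := by
  have h1 : OPT (dR m) ≤ facCost (dR m) m := Finset.inf'_le _ (Finset.mem_univ m)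
  have h2 : FC m m = 84 := by fin_cases m <;> decide
  rw [facCost_eq, h2] at h1
  exact_mod_cast h1

lemma hlin : ∀ j, IsLinearOrder (Fin 7) (sigmaStar j) := by
  intro j
  exact { refl := fun a => Nat.le_refl _
          trans := fun a b c => Nat.le_trans
          antisymm := fun a b h1 h2 => by
            revert h1 h2; revert j a b
            show ∀ j a b : Fin 7, rkStar j a ≤ rkStar j b → rkStar j b ≤ rkStar j a → a = b
            decide
          total := fun a b => Nat.le_total _ _ }


lemma coste0 (q : Fin 7 → ℝ) : cost (dR 0) q = 84 * q 0 + 156 * q 1 + 180 * q 2 + 180 * q 3 + 180 * q 4 + 180 * q 5 + 180 * q 6 := by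
  rw [cost_eq, Fin.sum_univ_seven]
  norm_num [show FC 0 0 = 84 by decide, show FC 0 1 = 156 by decide, show FC 0 2 = 180 by decide, show FC 0 3 = 180 by decide, show FC 0 4 = 180 by decide, show FC 0 5 = 180 by decide, show FC 0 6 = 180 by decide]
  ring

lemma coste1 (q : Fin 7 → ℝ) : cost (dR 1) q = 196 * q 0 + 84 * q 1 + 196 * q 2 + 196 * q 3 + 112 * q 4 + 196 * q 5 + 196 * q 6 := by
  rw [cost_eq, Fin.sum_univ_seven]
  norm_num [show FC 1 0 = 196 by decide, show FC 1 1 = 84 by decide, show FC 1 2 = 196 by decide, show FC 1 3 = 196 by decide, show FC 1 4 = 112 by decide, show FC 1 5 = 196 by decide, show FC 1 6 = 196 by decide]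
  ring

lemma coste2 (q : Fin 7 → ℝ) : cost (dR 2) q = 210 * q 0 + 210 * q 1 + 84 * q 2 + 252 * q 3 + 210 * q 4 + 210 * q 5 + 210 * q 6 := by
  rw [cost_eq, Fin.sum_univ_seven]
  norm_num [show FC 2 0 = 210 by decide, show FC 2 1 = 210 by decide, show FC 2 2 = 84 by decide, show FC 2 3 = 252 by decide, show FC 2 4 = 210 by decide, show FC 2 5 = 210 by decide, show FC 2 6 = 210 by decide]
  ring

lemma coste3 (q : Fin 7 → ℝ) : cost (dR 3) q = 210 * q 0 + 210 * q 1 + 210 * q 2 + 84 * q 3 + 210 * q 4 + 210 * q 5 + 210 * q 6 := by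
  rw [cost_eq, Fin.sum_univ_seven]
  norm_num [show FC 3 0 = 210 by decide, show FC 3 1 = 210 by decide, show FC 3 2 = 210 by decide, show FC 3 3 = 84 by decide, show FC 3 4 = 210 by decide, show FC 3 5 = 210 by decide, show FC 3 6 = 210 by decide]
  ring

lemma coste4 (q : Fin 7 → ℝ) : cost (dR 4) q = 156 * q 0 + 228 * q 1 + 180 * q 2 + 180 * q 3 + 84 * q 4 + 156 * q 5 + 156 * q 6 := by
  rw [cost_eq, Fin.sum_univ_seven]
  norm_num [show FC 4 0 = 156 by decide, show FC 4 1 = 228 by decide, show FC 4 2 = 180 by decide, show FC 4 3 = 180 by decide, show FC 4 4 = 84 by decide, show FC 4 5 = 156 by decide, show FC 4 6 = 156 by decide]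
  ring

lemma coste5 (q : Fin 7 → ℝ) : cost (dR 5) q = 156 * q 0 + 156 * q 1 + 180 * q 2 + 180 * q 3 + 180 * q 4 + 84 * q 5 + 180 * q 6 := by
  rw [cost_eq, Fin.sum_univ_seven]
  norm_num [show FC 5 0 = 156 by decide, show FC 5 1 = 156 by decide, show FC 5 2 = 180 by decide, show FC 5 3 = 180 by decide, show FC 5 4 = 180 by decide, show FC 5 5 = 84 by decide, show FC 5 6 = 180 by decide]
  ring

lemma coste6 (q : Fin 7 → ℝ) : cost (dR 6) q = 156 * q 0 + 156 * q 1 + 180 * q 2 + 180 * q 3 + 180 * q 4 + 156 * q 5 + 84 * q 6 := by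
  rw [cost_eq, Fin.sum_univ_seven]
  norm_num [show FC 6 0 = 156 by decide, show FC 6 1 = 156 by decide, show FC 6 2 = 180 by decide, show FC 6 3 = 180 by decide, show FC 6 4 = 180 by decide, show FC 6 5 = 156 by decide, show FC 6 6 = 84 by decide]
  ring

/-- any randomized social choice function `f` for 7 voters and 7 candidates
(mapping each preference profile — a tuple of linear orders — to a probability
distribution on the facilities) has distortion at least 2.063164: there are a profile `σ`
and a pseudometric `d` consistent with `σ` with `OPT d > 0` on which
`cost d (f σ) ≥ 2.063164 · OPT d`. -/
theorem distortion_lower_bound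
    (f : {σ : Fin 7 → Fin 7 → Fin 7 → Prop // ∀ j, IsLinearOrder (Fin 7) (σ j)} →
        Fin 7 → ℝ)
    (hf0 : ∀ σ i, 0 ≤ f σ i) (hf1 : ∀ σ, ∑ i, f σ i = 1) :
    ∃ σ : {σ : Fin 7 → Fin 7 → Fin 7 → Prop // ∀ j, IsLinearOrder (Fin 7) (σ j)},
      ∃ d : Pt → Pt → ℝ, IsPseudometric d ∧ Consistent d σ.1 ∧
        0 < OPT d ∧ 2.063164 * OPT d ≤ cost d (f σ) := by
  refine ⟨⟨sigmaStar, hlin⟩, ?_⟩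
  set q := f ⟨sigmaStar, hlin⟩ with hqdef
  have hq0 : ∀ i, 0 ≤ q i := hf0 ⟨sigmaStar, hlin⟩
  have hq1 : ∑ i, q i = 1 := hf1 ⟨sigmaStar, hlin⟩
  suffices h : ∃ m : Fin 7, 2.063164 * OPT (dR m) ≤ cost (dR m) q by
    obtain ⟨m, hm⟩ := h
    exact ⟨dR m, pseudo m, consist m, hOPTpos m, hm⟩
  by_contra hcon
  push_neg at hcon
  have hb : ∀ m : Fin 7, cost (dR m) q < 173.305776 := by
    intro m
    calc cost (dR m) q < 2.063164 * OPT (dR m) := hcon m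
      _ ≤ 2.063164 * 84 := by have := hOPTle m; linarith
      _ = 173.305776 := by norm_num
  have hb0 := hb 0; have hb1 := hb 1; have hb2 := hb 2; have hb3 := hb 3
  have hb4 := hb 4; have hb5 := hb 5; have hb6 := hb 6
  rw [coste0] at hb0; rw [coste1] at hb1; rw [coste2] at hb2; rw [coste3] at hb3
  rw [coste4] at hb4; rw [coste5] at hb5; rw [coste6] at hb6
  rw [Fin.sum_univ_seven] at hq1
  have h0 := hq0 0; have h1 := hq0 1; have h2 := hq0 2; have h3 := hq0 3
  have h4 := hq0 4; have h5 := hq0 5; have h6 := hq0 6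
  linarith
end

section
/- Let M_c = 0.038866 and define d^c on C ∪ F as M_c times the (unweighted) graph distance between blocks in the graph whose vertices are the blocks B2 = {4,5,6}, {c,1,2,3}, {d}, {a,b,e,f,g}, {7} and whose edges are B2–d, B2–{c,1,2,3}, B2–{a,b,e,f,g}, 7–{c,1,2,3}, 7–{a,b,e,f,g} (points in the same block are at distance 0). Then d^c is a pseudometric on C ∪ F, d^c is consistent with σ*, Σ_{j∈C} d^c(c,j) = 4·M_c > 0, and facility c minimizes Σ_{j∈C} d^c(o,j) over o ∈ F. -/
/-- The block graph for `d^c`: vertices are the blocks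
`0 = B2 = {4,5,6}`, `1 = {c,1,2,3}`, `2 = {d}`, `3 = {a,b,e,f,g}`, `4 = {7}`,
with edges B2–d, B2–{c,1,2,3}, B2–{a,b,e,f,g}, 7–{c,1,2,3}, 7–{a,b,e,f,g}. -/
def graphC : SimpleGraph (Fin 5) :=
  SimpleGraph.fromRel (fun u v =>
    (u, v) ∈ ([(0, 2), (0, 1), (0, 3), (4, 1), (4, 3)] :
      List (Fin 5 × Fin 5)))

/-- The block of each point (clients 1,2,3 ↦ {c,1,2,3}, clients 4,5,6 ↦ B2,
client 7 ↦ {7}; facility c ↦ {c,1,2,3}, d ↦ {d}, a,b,e,f,g ↦ {a,b,e,f,g}). -/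
def blkC : Pt → Fin 5
  | Sum.inl j => if j.val ≤ 2 then 1 else if j.val ≤ 5 then 0 else 4
  | Sum.inr i => ![3, 3, 1, 2, 3, 3, 3] i

/-- `d^c` is `M_c = 0.038866` times the graph distance between the blocks of the
two points (points in the same block are at distance 0). -/
noncomputable def dC : Pt → Pt → ℝ :=
  fun x y => 0.038866 * (graphC.dist (blkC x) (blkC y) : ℝ)

instance : DecidableRel graphC.Adj := fun u v =>
  decidable_of_iff _ (SimpleGraph.fromRel_adj _ u v).symm

lemma dist2_eq {u v w : Fin 5} (hne : u ≠ v) (hna : ¬ graphC.Adj u v)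
    (h1 : graphC.Adj u w) (h2 : graphC.Adj w v) : graphC.dist u v = 2 := by
  have hub : graphC.dist u v ≤ 2 := by
    simpa using SimpleGraph.dist_le
      (SimpleGraph.Walk.cons h1 (SimpleGraph.Walk.cons h2 SimpleGraph.Walk.nil))
  have h0 : graphC.dist u v ≠ 0 :=
    SimpleGraph.dist_ne_zero_iff_ne_and_reachable.mpr ⟨hne, (h1.reachable).trans h2.reachable⟩
  have hne1 : graphC.dist u v ≠ 1 := fun h => hna (SimpleGraph.dist_eq_one_iff_adj.mp h)
  omega

lemma dC01 : graphC.dist 0 1 = 1 := SimpleGraph.dist_eq_one_iff_adj.mpr (by decide)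
lemma dC02 : graphC.dist 0 2 = 1 := SimpleGraph.dist_eq_one_iff_adj.mpr (by decide)
lemma dC03 : graphC.dist 0 3 = 1 := SimpleGraph.dist_eq_one_iff_adj.mpr (by decide)
lemma dC14 : graphC.dist 1 4 = 1 := SimpleGraph.dist_eq_one_iff_adj.mpr (by decide)
lemma dC34 : graphC.dist 3 4 = 1 := SimpleGraph.dist_eq_one_iff_adj.mpr (by decide)
lemma dC04 : graphC.dist 0 4 = 2 :=
  dist2_eq (by decide) (by decide) (show graphC.Adj 0 1 by decide) (by decide)
lemma dC12 : graphC.dist 1 2 = 2 :=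
  dist2_eq (by decide) (by decide) (show graphC.Adj 1 0 by decide) (by decide)
lemma dC13 : graphC.dist 1 3 = 2 :=
  dist2_eq (by decide) (by decide) (show graphC.Adj 1 0 by decide) (by decide)
lemma dC23 : graphC.dist 2 3 = 2 :=
  dist2_eq (by decide) (by decide) (show graphC.Adj 2 0 by decide) (by decide)

lemma dC24 : graphC.dist 2 4 = 3 := by
  have hub : graphC.dist 2 4 ≤ 3 := by
    have := SimpleGraph.dist_le
      (SimpleGraph.Walk.cons (show graphC.Adj 2 0 by decide)
        (SimpleGraph.Walk.cons (show graphC.Adj 0 1 by decide)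
          (SimpleGraph.Walk.cons (show graphC.Adj 1 4 by decide) SimpleGraph.Walk.nil)))
    simpa [SimpleGraph.Walk.length_cons, SimpleGraph.Walk.length_nil] using this
  have h0 : graphC.dist 2 4 ≠ 0 := by
    refine SimpleGraph.dist_ne_zero_iff_ne_and_reachable.mpr ⟨by decide, ?_⟩
    exact ((show graphC.Adj 2 0 by decide).reachable).trans
      (((show graphC.Adj 0 1 by decide).reachable).trans
        (show graphC.Adj 1 4 by decide).reachable)
  have h1 : graphC.dist 2 4 ≠ 1 := fun h => by
    have := SimpleGraph.dist_eq_one_iff_adj.mp h; revert this; decide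
  have h2 : graphC.dist 2 4 ≠ 2 := by
    intro h
    obtain ⟨p, hp⟩ := SimpleGraph.exists_walk_of_dist_ne_zero h0
    rw [h] at hp
    cases p with
    | cons ha q =>
      cases q with
      | nil => simp at hp
      | cons hb r =>
        have hr : r.length = 0 := by simpa using hp
        have := SimpleGraph.Walk.eq_of_length_eq_zero hr
        subst this
        have hno : ∀ w : Fin 5, ¬(graphC.Adj 2 w ∧ graphC.Adj w 4) := by decide
        exact hno _ ⟨ha, hb⟩
  omega

def Dmat : Fin 5 → Fin 5 → ℕ :=
  ![![0,1,1,1,2],![1,0,2,2,1],![1,2,0,2,3],![1,2,2,0,1],![2,1,3,1,0]]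

lemma distMat : ∀ u v : Fin 5, graphC.dist u v = Dmat u v := by
  have sy : ∀ (u v : Fin 5) (n : ℕ), graphC.dist u v = n → graphC.dist v u = n := by
    intro u v n h; rwa [SimpleGraph.dist_comm]
  intro u v
  fin_cases u <;> fin_cases v <;> simp [Dmat] <;>
    first
      | decide
      | exact dC04 | exact dC12 | exact dC13 | exact dC23 | exact dC24
      | exact sy _ _ _ dC04 | exact sy _ _ _ dC12 | exact sy _ _ _ dC13
      | exact sy _ _ _ dC23 | exact sy _ _ _ dC24

lemma dC_eq (x y : Pt) : dC x y = 0.038866 * (Dmat (blkC x) (blkC y) : ℝ) := by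
  rw [dC, distMat]

lemma Dmat_tri : ∀ a b c : Fin 5, Dmat a b ≤ Dmat a c + Dmat b c := by decide

lemma Dmat_symm : ∀ a b : Fin 5, Dmat a b = Dmat b a := by decide

lemma consist_nat : ∀ j a b : Fin 7, rkStar j a ≤ rkStar j b →
    Dmat (blkC (Sum.inr a)) (blkC (Sum.inl j)) ≤ Dmat (blkC (Sum.inr b)) (blkC (Sum.inl j)) := by
  decide

/-- `d^c` is a pseudometric consistent with `σ*`, the total client cost
of facility `c` is `4 · M_c > 0`, and `c` minimizes the total client cost. -/
theorem dC_certificate :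
    IsPseudometric dC ∧ Consistent dC sigmaStar ∧
      facCost dC 2 = 4 * 0.038866 ∧ 0 < facCost dC 2 ∧
      ∀ o : Fin 7, facCost dC 2 ≤ facCost dC o := by
  have hM : (0:ℝ) < 0.038866 := by norm_num
  have hfc : ∀ o : Fin 7, facCost dC o =
      0.038866 * ∑ j, (Dmat (blkC (Sum.inr o)) (blkC (Sum.inl j)) : ℝ) := by
    intro o
    simp [facCost, dC_eq, Finset.mul_sum]
  have h2n : ∑ j, Dmat (blkC (Sum.inr 2)) (blkC (Sum.inl j)) = 4 := by decide
  refine ⟨⟨?_, ?_, ?_, ?_⟩, ?_, ?_, ?_, ?_⟩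
  · intro x y
    rw [dC_eq]
    positivity
  · intro x y
    rw [dC_eq, dC_eq, Dmat_symm]
  · intro x
    have hd : ∀ a : Fin 5, Dmat a a = 0 := by decide
    rw [dC_eq, hd]
    simp
  · intro x y z
    rw [dC_eq, dC_eq, dC_eq, ← mul_add]
    have h := Dmat_tri (blkC x) (blkC y) (blkC z)
    have h' : (Dmat (blkC x) (blkC y) : ℝ) ≤ Dmat (blkC x) (blkC z) + Dmat (blkC y) (blkC z) := by
      exact_mod_cast h
    nlinarith
  · intro j a b hab
    rw [dC_eq, dC_eq]
    have h := consist_nat j a b hab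
    have h' : (Dmat (blkC (Sum.inr a)) (blkC (Sum.inl j)) : ℝ) ≤
        Dmat (blkC (Sum.inr b)) (blkC (Sum.inl j)) := by exact_mod_cast h
    nlinarith
  · rw [hfc, ← Nat.cast_sum, h2n]
    norm_num
  · rw [hfc, ← Nat.cast_sum, h2n]
    norm_num
  · intro o
    rw [hfc, hfc, ← Nat.cast_sum, ← Nat.cast_sum, h2n]
    have key : ∀ o : Fin 7,
        (4 : ℕ) ≤ ∑ j, Dmat (blkC (Sum.inr o)) (blkC (Sum.inl j)) := by decide
    have h4 : (4:ℝ) ≤ ((∑ j, Dmat (blkC (Sum.inr o)) (blkC (Sum.inl j)) : ℕ) : ℝ) := by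
      exact_mod_cast key o
    nlinarith
end
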